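/- arXiv:1709.08149 — 6 statements merged into one kernel-verified Lean document; each statement's English description precedes it below -/
import Mathlib

section
/- Suppose a sequence of vectors e_ℓ ∈ ℂⁿ satisfies |e_{k+ℓ}|_∞ ≤ M₀ρ^ℓ E_k + Δ·Σ_{j=0}^{ℓ-1} ρ^{ℓ-j-1} E_{k+j} for all ℓ ≥ 1, where M₀ ≥ 1, ρ ∈ (0,1), Δ ≥ 0, |e_k|_∞ ≤ E_k, and the sequence E is defined by E_{k+1} = (M₀ρ+Δ)E_k and E_{k+ℓ+1} = (ρ+Δ)E_{k+ℓ} for ℓ ≥ 1. Then |e_{k+ℓ}|_∞ ≤ E_{k+ℓ} for all ℓ ≥ 0. -/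
/-- the error bound sequence dominates the estimation error. -/
theorem stmt_1 (n : ℕ) (M₀ ρ Δ : ℝ) (hM₀ : 1 ≤ M₀) (hρ0 : 0 < ρ) (hρ1 : ρ < 1) (hΔ : 0 ≤ Δ)
    (e : ℕ → (Fin n → ℂ)) (E : ℕ → ℝ) (k : ℕ)
    (hEk : 0 ≤ E k)
    (hek : ‖e k‖ ≤ E k)
    (hE0 : E (k + 1) = (M₀ * ρ + Δ) * E k)
    (hE1 : ∀ ℓ : ℕ, 1 ≤ ℓ → E (k + ℓ + 1) = (ρ + Δ) * E (k + ℓ))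
    (he : ∀ ℓ : ℕ, 1 ≤ ℓ →
      ‖e (k + ℓ)‖ ≤ M₀ * ρ ^ ℓ * E k + Δ * ∑ j ∈ Finset.range ℓ, ρ ^ (ℓ - j - 1) * E (k + j)) :
    ∀ ℓ : ℕ, ‖e (k + ℓ)‖ ≤ E (k + ℓ) := by
  have key : ∀ ℓ : ℕ, 1 ≤ ℓ →
      M₀ * ρ ^ ℓ * E k + Δ * ∑ j ∈ Finset.range ℓ, ρ ^ (ℓ - j - 1) * E (k + j) ≤ E (k + ℓ) := by
    intro ℓ hℓ
    induction ℓ with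
    | zero => omega
    | succ m ih =>
      rcases Nat.lt_or_ge m 1 with h1 | hm
      · have hm0 : m = 0 := by omega
        subst hm0
        simp [hE0]
        nlinarith
      · have ihm := ih hm
        have hrec := hE1 m hm
        have hsum : ∑ j ∈ Finset.range (m + 1), ρ ^ (m + 1 - j - 1) * E (k + j)
            = ρ * ∑ j ∈ Finset.range m, ρ ^ (m - j - 1) * E (k + j) + E (k + m) := by
          rw [Finset.sum_range_succ, Finset.mul_sum]
          congr 1
          · apply Finset.sum_congr rfl
            intro j hj
            have hj' : j < m := Finset.mem_range.mp hj
            have hpow : m + 1 - j - 1 = (m - j - 1) + 1 := by omega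
            rw [hpow, pow_succ]
            ring
          · simp
        rw [hsum, ← add_assoc, hrec]
        have hEnn : 0 ≤ E (k + m) := le_trans (norm_nonneg _) (le_trans (he m hm) ihm)
        have hmul := mul_le_mul_of_nonneg_left ihm hρ0.le
        have hps : ρ ^ (m + 1) = ρ * ρ ^ m := by rw [pow_succ]; ring
        rw [hps]; ring_nf at hmul ⊢; linarith
  intro ℓ
  cases ℓ with
  | zero => simpa using hek
  | succ m => exact le_trans (he (m + 1) (by omega)) (key (m + 1) (by omega))
end

section
/- Let θ_a, θ₀, θ be positive reals satisfying θ · (θ₀/θ)^{ν_f} · (θ_a/θ)^{ν_d} < 1, where ν_d, ν_f ≥ 0. Suppose a nonnegative sequence (E_k) evolves on [0, k_e] by multiplying θ_a on each of p disjoint 'attack' intervals of total length D, multiplying θ₀ at p+1 designated time-steps (one immediately following each attack interval and one at the initial step), and multiplying θ at all remaining steps, where D ≤ Π_d + ν_d k_e and p ≤ Π_f + ν_f k_e for constants Π_d, Π_f ≥ 0. Then E_{k_e} ≤ (θ₀^{Π_f+1} θ_a^{Π_d} / θ^{Π_f+Π_d+1}) · (θ (θ₀/θ)^{ν_f} (θ_a/θ)^{ν_d})^{k_e}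 · E_0, assuming θ₀ ≥ θ and θ_a ≥ θ. -/
/-!
Factor θ out of every step: the multiplier at step j is θ times θa/θ on an attack step, θ₀/θ on
a step of B, and 1 otherwise, so E_{ke} = θ^{ke} (θa/θ)^D (θ₀/θ)^{p+1} E_0. Both ratios are at
least 1, so the exponents D and p + 1 may be raised to their bounds Pd + νd ke and
Pf + 1 + νf ke, and the result is the claimed bound rewritten.
-/

open Finset

theorem eq_prod_range_mul_of_succ_eq_mul {M : Type*} [CommMonoid M] {n : ℕ} {E f : ℕ → M}
    (hrec : ∀ j < n, E (j + 1) = f j * E j) : E n = (∏ j ∈ range n, f j) * E 0 := by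
  induction n with
  | zero => simp
  | succ m ih =>
    rw [prod_range_succ, hrec m m.lt_succ_self, ih fun j hj => hrec j (hj.trans m.lt_succ_self)]
    ac_rfl

theorem prod_ite_mem_ite_mem_one {ι M : Type*} [DecidableEq ι] [CommMonoid M]
    {s A B : Finset ι} (hA : A ⊆ s) (hB : B ⊆ s) (hAB : Disjoint A B) (a b : M) :
    ∏ j ∈ s, (if j ∈ A then a else if j ∈ B then b else 1) = a ^ #A * b ^ #B := by
  have hsplit : ∀ j, (if j ∈ A then a else if j ∈ B then b else 1)
      = (if j ∈ A then a else 1) * (if j ∈ B then b else 1) := fun j => by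
    by_cases hjA : j ∈ A
    · simp [hjA, disjoint_left.mp hAB hjA]
    · simp [hjA]
  simp only [hsplit, prod_mul_distrib, prod_ite_mem, inter_eq_right.mpr hA,
    inter_eq_right.mpr hB, prod_const]

theorem eq_pow_mul_div_pow_mul_div_pow_mul {ke : ℕ} {E : ℕ → ℝ} {θa θ₀ θ : ℝ} (hθ : θ ≠ 0)
    {A B : Finset ℕ} (hA : A ⊆ range ke) (hB : B ⊆ range ke) (hAB : Disjoint A B)
    (hrec : ∀ j < ke, E (j + 1) = (if j ∈ A then θa else if j ∈ B then θ₀ else θ) * E j) :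
    E ke = θ ^ ke * (θa / θ) ^ #A * (θ₀ / θ) ^ #B * E 0 := by
  have hfactor : ∀ j, (if j ∈ A then θa else if j ∈ B then θ₀ else θ)
      = θ * (if j ∈ A then θa / θ else if j ∈ B then θ₀ / θ else 1) := fun j => by
    split_ifs <;> field_simp
  rw [eq_prod_range_mul_of_succ_eq_mul hrec]
  simp only [hfactor, prod_mul_distrib, prod_const, card_range,
    prod_ite_mem_ite_mem_one hA hB hAB]
  ring

theorem rpow_mul_rpow_div_rpow_mul_rpow {θ x y : ℝ} (hθ : 0 < θ) (hx : 0 < x) (hy : 0 < y)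
    (r s μ ν k : ℝ) :
    x ^ r * y ^ s / θ ^ (r + s) * (θ * (x / θ) ^ μ * (y / θ) ^ ν) ^ k
      = θ ^ k * (x / θ) ^ (r + μ * k) * (y / θ) ^ (s + ν * k) := by
  have hxθ : 0 < x / θ := div_pos hx hθ
  have hyθ : 0 < y / θ := div_pos hy hθ
  have hprefactor : x ^ r * y ^ s / θ ^ (r + s) = (x / θ) ^ r * (y / θ) ^ s := by
    rw [Real.div_rpow hx.le hθ.le, Real.div_rpow hy.le hθ.le, Real.rpow_add hθ]
    ring
  rw [hprefactor, Real.mul_rpow (by positivity) (by positivity),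
    Real.mul_rpow hθ.le (by positivity), ← Real.rpow_mul hxθ.le, ← Real.rpow_mul hyθ.le,
    Real.rpow_add hxθ, Real.rpow_add hyθ]
  ring

theorem stmt_3_general (θa θ₀ θ νd νf Pd Pf : ℝ)
    (hθ : 0 < θ) (hθ₀ : 0 < θ₀) (hθa : 0 < θa)
    (hθθ₀ : θ ≤ θ₀) (hθθa : θ ≤ θa)
    (ke : ℕ) (E : ℕ → ℝ) (hEnonneg : ∀ k, 0 ≤ E k)
    (A B : Finset ℕ) (hA : A ⊆ Finset.range ke) (hB : B ⊆ Finset.range ke)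
    (hAB : Disjoint A B)
    (D p : ℕ) (hD : A.card = D) (hp : B.card = p + 1)
    (hDbound : (D : ℝ) ≤ Pd + νd * ke) (hpbound : (p : ℝ) ≤ Pf + νf * ke)
    (hrec : ∀ j < ke, E (j + 1) = (if j ∈ A then θa else if j ∈ B then θ₀ else θ) * E j) :
    E ke ≤ (θ₀ ^ (Pf + 1) * θa ^ Pd / θ ^ (Pf + Pd + 1))
      * (θ * (θ₀ / θ) ^ νf * (θa / θ) ^ νd) ^ (ke : ℝ) * E 0 := by
  have hθa1 : 1 ≤ θa / θ := (one_le_div hθ).mpr hθθa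
  have hθ₀1 : 1 ≤ θ₀ / θ := (one_le_div hθ).mpr hθθ₀
  have hE := eq_pow_mul_div_pow_mul_div_pow_mul hθ.ne' hA hB hAB hrec
  rw [hD, hp, ← Real.rpow_natCast, ← Real.rpow_natCast (θa / θ), ← Real.rpow_natCast (θ₀ / θ),
    Nat.cast_add_one] at hE
  have hDexp : (θa / θ) ^ (D : ℝ) ≤ (θa / θ) ^ (Pd + νd * ke) :=
    Real.rpow_le_rpow_of_exponent_le hθa1 hDbound
  have hpexp : (θ₀ / θ) ^ ((p : ℝ) + 1) ≤ (θ₀ / θ) ^ (Pf + 1 + νf * ke) :=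
    Real.rpow_le_rpow_of_exponent_le hθ₀1 (by linarith)
  calc E ke = θ ^ (ke : ℝ) * (θa / θ) ^ (D : ℝ) * (θ₀ / θ) ^ ((p : ℝ) + 1) * E 0 := hE
    _ ≤ θ ^ (ke : ℝ) * (θa / θ) ^ (Pd + νd * ke) * (θ₀ / θ) ^ (Pf + 1 + νf * ke) * E 0 := by
      gcongr θ ^ (ke : ℝ) * ?_ * ?_ * E 0
      exact hEnonneg 0
    _ = _ := by
      rw [add_right_comm Pf Pd 1, rpow_mul_rpow_div_rpow_mul_rpow hθ hθ₀ hθa]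
      ring

/-- exponential decay of the error bound under averagely bounded
DoS duration and frequency. -/
theorem stmt_3 (θa θ₀ θ νd νf Pd Pf : ℝ)
    (hθ : 0 < θ) (hθ₀ : 0 < θ₀) (hθa : 0 < θa)
    (hθθ₀ : θ ≤ θ₀) (hθθa : θ ≤ θa)
    (hνd : 0 ≤ νd) (hνf : 0 ≤ νf) (hPd : 0 ≤ Pd) (hPf : 0 ≤ Pf)
    (hcontract : θ * (θ₀ / θ) ^ νf * (θa / θ) ^ νd < 1)
    (ke : ℕ) (E : ℕ → ℝ) (hEnonneg : ∀ k, 0 ≤ E k)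
    (A B : Finset ℕ) (hA : A ⊆ Finset.range ke) (hB : B ⊆ Finset.range ke)
    (hAB : Disjoint A B)
    (D p : ℕ) (hD : A.card = D) (hp : B.card = p + 1)
    (hDbound : (D : ℝ) ≤ Pd + νd * ke) (hpbound : (p : ℝ) ≤ Pf + νf * ke)
    (hrec : ∀ j < ke, E (j + 1) = (if j ∈ A then θa else if j ∈ B then θ₀ else θ) * E j) :
    E ke ≤ (θ₀ ^ (Pf + 1) * θa ^ Pd / θ ^ (Pf + Pd + 1))
      * (θ * (θ₀ / θ) ^ νf * (θa / θ) ^ νd) ^ (ke : ℝ) * E 0 :=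
  stmt_3_general θa θ₀ θ νd νf Pd Pf hθ hθ₀ hθa hθθ₀ hθθa ke E hEnonneg A B hA hB hAB D p hD hp
    hDbound hpbound hrec
end

section
/- Let η ≥ 1 be an integer. Suppose a set S ⊆ ℤ₊ of 'attack times' satisfies: the number of attack times in [0,k) is at most Π_d + ν_d k, and the number of maximal runs of consecutive attack times intersecting [0,k) is at most Π_f + ν_f k, for all k, with ν_d + (η−1)ν_f < 1. Then there exist η consecutive time-steps, all not in S, ending by time k_e + 1, where k_e is the largest integer with k_e ≤ (Π_d + (Π_f+1)(η−1)) / (1 − ν_d − (η−1)ν_f). -/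
/-- under averagely bounded DoS duration and frequency with
`ν_d + (η−1)ν_f < 1`, there are `η` consecutive attack-free time-steps ending
by time `k_e + 1`, where `k_e = ⌊(Π_d + (Π_f+1)(η−1)) / (1 − ν_d − (η−1)ν_f)⌋`. -/
theorem stmt_9 (η : ℕ) (hη : 1 ≤ η) (S : Set ℕ) [DecidablePred (· ∈ S)]
    (Pd Pf νd νf : ℝ) (hPd : 0 ≤ Pd) (hPf : 0 ≤ Pf) (hνd : 0 ≤ νd) (hνf : 0 ≤ νf)
    (hcond : νd + (η - 1 : ℝ) * νf < 1)
    (hdur : ∀ k : ℕ, (((Finset.range k).filter (· ∈ S)).card : ℝ) ≤ Pd + νd * k)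
    (hfreq : ∀ k : ℕ,
      (((Finset.range k).filter (fun t => t ∈ S ∧ (t = 0 ∨ t - 1 ∉ S))).card : ℝ)
        ≤ Pf + νf * k) :
    ∃ t : ℕ, (∀ j < η, t + j ∉ S) ∧
      t + η ≤ ⌊(Pd + (Pf + 1) * (η - 1 : ℝ)) / (1 - νd - (η - 1 : ℝ) * νf)⌋₊ + 1 := by
  classical
  by_contra hcon
  push_neg at hcon
  set Q : ℝ := (Pd + (Pf + 1) * (η - 1 : ℝ)) / (1 - νd - (η - 1 : ℝ) * νf) with hQ
  set K : ℕ := ⌊Q⌋₊ + 1 with hKdef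
  -- every window of length η inside [0,K) contains an attack
  have H : ∀ t, t ∉ S → t + η ≤ K → ∃ j, 0 < j ∧ j < η ∧ t + j ∈ S := by
    intro t hts ht
    by_contra hall
    push_neg at hall
    have := hcon t (by
      intro j hj
      rcases Nat.eq_zero_or_pos j with h0 | h0
      · simpa [h0] using hts
      · exact hall j h0 hj)
    omega
  -- the "next attack" function
  set f : ℕ → ℕ := fun t =>
    if h : ∃ j, 0 < j ∧ j < η ∧ t + j ∈ S then t + Nat.find h else 0 with hfdef
  set R : Finset ℕ :=
    (Finset.range K).filter (fun t => t ∈ S ∧ (t = 0 ∨ t - 1 ∉ S)) with hR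
  set B : Finset ℕ := (Finset.range K).filter (fun t => t ∉ S) with hB
  set B₁ : Finset ℕ := B.filter (fun t => t + η ≤ K) with hB1
  set B₂ : Finset ℕ := B.filter (fun t => ¬ (t + η ≤ K)) with hB2
  have hfprop : ∀ t ∈ B₁, f t ∈ R ∧ t < f t ∧ f t ≤ t + (η - 1) := by
    intro t htB
    simp only [hB1, hB, Finset.mem_filter, Finset.mem_range] at htB
    obtain ⟨⟨htK, hts⟩, htη⟩ := htB
    have hex : ∃ j, 0 < j ∧ j < η ∧ t + j ∈ S := H t hts htη
    have hfval : f t = t + Nat.find hex := by simp [hfdef, hex]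
    obtain ⟨hj0, hjη, hjS⟩ := Nat.find_spec hex
    refine ⟨?_, ?_, ?_⟩
    · simp only [hR, Finset.mem_filter, Finset.mem_range, hfval]
      refine ⟨by omega, hjS, Or.inr ?_⟩
      rcases Nat.eq_or_lt_of_le (Nat.one_le_iff_ne_zero.mpr (by omega) : 1 ≤ Nat.find hex)
        with h1 | h1
      · have : t + Nat.find hex - 1 = t := by omega
        rw [this]; exact hts
      · have hmin := Nat.find_min hex (m := Nat.find hex - 1) (by omega)
        push_neg at hmin
        have : t + Nat.find hex - 1 = t + (Nat.find hex - 1) := by omega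
        rw [this]
        exact hmin (by omega) (by omega)
    · omega
    · omega
  have hcard1 : B₁.card ≤ (η - 1) * R.card := by
    apply Finset.card_le_mul_card_image_of_maps_to (f := f)
      (fun t ht => (hfprop t ht).1)
    intro b _
    have hsub : B₁.filter (fun t => f t = b) ⊆ Finset.Ico (b - (η - 1)) b := by
      intro t ht
      simp only [Finset.mem_filter] at ht
      obtain ⟨htB, hfb⟩ := ht
      obtain ⟨_, h1, h2⟩ := hfprop t htB
      simp only [Finset.mem_Ico]
      omega
    calc (B₁.filter (fun t => f t = b)).card ≤ (Finset.Ico (b - (η - 1)) b).card :=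
          Finset.card_le_card hsub
      _ = b - (b - (η - 1)) := Nat.card_Ico _ _
      _ ≤ η - 1 := by omega
  have hcard2 : B₂.card ≤ η - 1 := by
    have hsub : B₂ ⊆ Finset.Ico (K - (η - 1)) K := by
      intro t ht
      simp only [hB2, hB, Finset.mem_filter, Finset.mem_range] at ht
      simp only [Finset.mem_Ico]
      omega
    calc B₂.card ≤ (Finset.Ico (K - (η - 1)) K).card := Finset.card_le_card hsub
      _ = K - (K - (η - 1)) := Nat.card_Ico _ _
      _ ≤ η - 1 := by omega
  have hsplit : B₁.card + B₂.card = B.card :=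
    Finset.card_filter_add_card_filter_not (p := fun t => t + η ≤ K)
  have hsplit2 : ((Finset.range K).filter (· ∈ S)).card + B.card = K := by
    have := Finset.card_filter_add_card_filter_not
      (s := Finset.range K) (p := fun t => t ∈ S)
    simpa [hB, Finset.card_range] using this
  -- now the numeric contradiction
  have hKnat : K ≤ ((Finset.range K).filter (· ∈ S)).card + (η - 1) * R.card + (η - 1) := by
    omega
  have hc : (0:ℝ) < 1 - νd - (η - 1 : ℝ) * νf := by linarith
  have hηcast : ((η - 1 : ℕ) : ℝ) = (η : ℝ) - 1 := by
    push_cast [Nat.cast_sub hη]; ring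
  have hKR : (K : ℝ) ≤ (((Finset.range K).filter (· ∈ S)).card : ℝ)
      + ((η - 1 : ℕ) : ℝ) * (R.card : ℝ) + ((η - 1 : ℕ) : ℝ) := by
    exact_mod_cast hKnat
  have hD := hdur K
  have hF := hfreq K
  rw [hηcast] at hKR
  have hη1 : (0:ℝ) ≤ (η : ℝ) - 1 := by
    have : (1:ℝ) ≤ (η:ℝ) := by exact_mod_cast hη
    linarith
  have hRb : (R.card : ℝ) ≤ Pf + νf * K := by simpa [hR] using hF
  have hfinal : (K : ℝ) * (1 - νd - (η - 1 : ℝ) * νf) ≤ Pd + (Pf + 1) * (η - 1 : ℝ) := by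
    nlinarith [mul_le_mul_of_nonneg_left hRb hη1]
  have hKle : (K : ℝ) ≤ Q := by
    rw [hQ, le_div_iff₀ hc]
    exact hfinal
  have : K ≤ ⌊Q⌋₊ := Nat.le_floor hKle
  omega
end

section
/- Let η ≥ 1 be an integer and S ⊆ ℤ₊ a set of attack times with |S ∩ [0,k)| ≤ Π_d + ν_d k for all k, where ν_d < 1/η. Then there exist η consecutive time-steps all outside S occurring by time k_e + 1, where k_e is the largest integer with k_e ≤ ((Π_d + 1)η − 1)/(1 − η ν_d). -/
/-- under an averagely bounded DoS duration with `ν_d < 1/η`,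
there are `η` consecutive attack-free time-steps occurring by time `k_e + 1`,
where `k_e = ⌊((Π_d + 1)η − 1)/(1 − η ν_d)⌋`. -/
theorem stmt_10 (η : ℕ) (hη : 1 ≤ η) (S : Set ℕ) [DecidablePred (· ∈ S)]
    (Pd νd : ℝ) (hPd : 0 ≤ Pd) (hνd0 : 0 ≤ νd) (hνd : νd < 1 / (η : ℝ))
    (hdur : ∀ k : ℕ, (((Finset.range k).filter (· ∈ S)).card : ℝ) ≤ Pd + νd * k) :
    ∃ t : ℕ, (∀ j < η, t + j ∉ S) ∧
      t + η ≤ ⌊((Pd + 1) * η - 1) / (1 - (η : ℝ) * νd)⌋₊ + 1 := by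
  by_contra hcon
  push_neg at hcon
  have hηpos : 0 < η := hη
  have hEpos : (0:ℝ) < η := by exact_mod_cast hηpos
  set ke := ⌊((Pd + 1) * η - 1) / (1 - (η : ℝ) * νd)⌋₊ with hkedef
  set m := (ke + 1) / η with hmdef
  have hc : (0:ℝ) < 1 - (η:ℝ) * νd := by
    have : (η:ℝ) * νd < 1 := by
      have := (lt_div_iff₀ hEpos).mp hνd
      linarith
    linarith
  have hmke : m * η ≤ ke + 1 := Nat.div_mul_le_self _ _
  -- every window of length η starting at i*η with i < m contains an attack
  have hatt : ∀ i, ∃ j, i < m → j < η ∧ i * η + j ∈ S := by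
    intro i
    by_cases hi : i < m
    · by_contra hno
      push_neg at hno
      have hfree : ∀ j < η, i * η + j ∉ S := by
        intro j hj hmem
        exact ((hno j).2 hj) hmem
      have hlt : ke + 1 < i * η + η := hcon (i * η) hfree
      have h2 : i * η + η ≤ m * η := by
        calc i * η + η = (i + 1) * η := by ring
          _ ≤ m * η := Nat.mul_le_mul_right η hi
      exact Nat.lt_irrefl _ (lt_of_lt_of_le hlt (h2.trans hmke))
    · exact ⟨0, fun h => absurd h hi⟩
  choose f hf using hatt
  -- count attacks: at least m attacks in [0, m*η)
  have hcard : m ≤ ((Finset.range (m * η)).filter (· ∈ S)).card := by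
    have hmap : ∀ i ∈ Finset.range m,
        i * η + f i ∈ (Finset.range (m * η)).filter (· ∈ S) := by
      intro i hi
      simp only [Finset.mem_range] at hi
      obtain ⟨hj1, hj2⟩ := hf i hi
      simp only [Finset.mem_filter, Finset.mem_range]
      refine ⟨?_, hj2⟩
      calc i * η + f i < i * η + η := Nat.add_lt_add_left hj1 _
        _ = (i + 1) * η := by ring
        _ ≤ m * η := Nat.mul_le_mul_right η hi
    have hinj : Set.InjOn (fun i => i * η + f i) (Finset.range m) := by
      intro a ha b hb hab
      simp only [Finset.coe_range, Set.mem_Iio] at ha hb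
      have hda : (a * η + f a) / η = a := by
        rw [mul_comm, Nat.mul_add_div hηpos, Nat.div_eq_of_lt (hf a ha).1, add_zero]
      have hdb : (b * η + f b) / η = b := by
        rw [mul_comm, Nat.mul_add_div hηpos, Nat.div_eq_of_lt (hf b hb).1, add_zero]
      simp only at hab
      rw [← hda, ← hdb, hab]
    have h := Finset.card_le_card_of_injOn (fun i => i * η + f i) hmap hinj
    simpa using h
  -- duration bound at k = m * η
  have hdur' : (m : ℝ) ≤ Pd + νd * ((m * η : ℕ) : ℝ) :=
    le_trans (by exact_mod_cast hcard) (hdur (m * η))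
  have hA : (m : ℝ) * (1 - (η:ℝ) * νd) ≤ Pd := by
    push_cast at hdur'
    nlinarith [hdur']
  -- floor bound
  have hfl : (Pd + 1) * (η:ℝ) - 1 < ((ke:ℝ) + 1) * (1 - (η:ℝ) * νd) := by
    have h1 : ((Pd + 1) * (η:ℝ) - 1) / (1 - (η:ℝ) * νd) < (ke:ℝ) + 1 := by
      have := Nat.lt_floor_add_one (((Pd + 1) * (η:ℝ) - 1) / (1 - (η : ℝ) * νd))
      rw [← hkedef] at this
      exact_mod_cast this
    exact (div_lt_iff₀ hc).mp h1
  -- ke + 2 ≤ η*m + η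
  have hke2 : (ke : ℝ) + 2 ≤ (η:ℝ) * (m:ℝ) + (η:ℝ) := by
    have h1 := Nat.div_add_mod (ke + 1) η
    have h2 : (ke + 1) % η < η := Nat.mod_lt _ hηpos
    have hlt : ke + 1 < η * ((ke + 1) / η) + η := by
      conv_lhs => rw [← h1]
      exact Nat.add_lt_add_left h2 _
    have h3 : ke + 2 ≤ η * m + η := by rw [hmdef]; exact hlt
    exact_mod_cast h3
  have hE1 : (1:ℝ) ≤ (η:ℝ) := by exact_mod_cast hη
  have hc1 : 1 - (η:ℝ) * νd ≤ 1 := by nlinarith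
  -- final contradiction
  nlinarith [mul_le_mul_of_nonneg_right
      (show (ke:ℝ) + 1 ≤ (η:ℝ) * (m:ℝ) + (η:ℝ) - 1 by linarith) hc.le,
    mul_le_mul_of_nonneg_left hA (le_trans zero_le_one hE1),
    mul_nonneg (sub_nonneg.mpr hE1) (sub_nonneg.mpr hc1)]
end

section
/- Let Λ = diag(λ e^{i2π a₁/ζ}, …, λ e^{i2π a_n/ζ}) with λ ≠ 0, ζ a prime, and a₁,…,a_n ∈ ℤ pairwise incongruent mod ζ. Let C ∈ ℂ^{1×n} have all entries nonzero. If b₁,…,b_n ∈ ℤ₊ are pairwise incongruent mod ζ, then the matrix whose rows are C Λ^{b₁}, …, C Λ^{b_n} is invertible. -/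
/-!
The matrix is `diag(λ ^ b_m) * F * diag(c_ℓ)` with `F = (ω ^ (a_ℓ b_m))`, `ω = e^{2πi/ζ}`, a square
minor of the Fourier matrix of prime order `ζ`; so the claim is Chebotarev's theorem that all
such minors are nonzero. If `F` were singular, it would have a kernel vector `w` over the ring of
integers of `ℚ(ω)` with a coordinate prime to `π = ω - 1`. The polynomial
`Q = ∑ w_ℓ X ^ (a_ℓ mod ζ)` vanishes at the `n` distinct points `ω ^ b_m`, all `≡ 1 mod π`, so
modulo the prime `π` (residue characteristic `ζ`) it has at most `n` terms, all of degree `< ζ`,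
and is divisible by `(X - 1) ^ n`. Such a polynomial vanishes, hence `w ≡ 0 mod π`, a contradiction.
-/

open Polynomial Finset

namespace Polynomial

variable {R : Type*} [CommRing R]

theorem coeff_X_mul_derivative_sub_C_mul (P : R[X]) (t k : ℕ) :
    (X * derivative P - C (t : R) * P).coeff k = ((k : R) - t) * P.coeff k := by
  cases k with
  | zero => simp
  | succ k => rw [coeff_sub, coeff_X_mul, coeff_derivative, coeff_C_mul]; push_cast; ring

theorem eq_zero_of_X_sub_one_pow_dvd [IsDomain R] {p : ℕ} [CharP R p] {n : ℕ} {P : R[X]}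
    (hcard : #P.support ≤ n) (hlt : ∀ k ∈ P.support, k < p) (hdvd : (X - 1) ^ n ∣ P) :
    P = 0 := by
  induction n generalizing P with
  | zero => simpa using hcard
  | succ n ih =>
    by_contra hP
    set t := P.natTrailingDegree
    have ht : t ∈ P.support := natTrailingDegree_mem_support_of_nonzero hP
    -- `X P' - t P` kills the coefficient of `X ^ t`, losing one term but only one factor `X - 1`.
    set Q := X * derivative P - C (t : R) * P with hQdef
    have hQsupp : Q.support ⊆ P.support.erase t := fun k hk => by
      rw [mem_support_iff, coeff_X_mul_derivative_sub_C_mul] at hk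
      exact mem_erase.mpr ⟨fun hkt => hk (by simp [hkt]),
        mem_support_iff.mpr (right_ne_zero_of_mul hk)⟩
    have hQ : Q = 0 := by
      refine ih ?_ (fun k hk => hlt k (mem_of_mem_erase (hQsupp hk))) ?_
      · grw [hQsupp, card_erase_of_mem ht]
        omega
      · exact dvd_sub ((pow_sub_one_dvd_derivative_of_pow_dvd hdvd).mul_left X)
          (((pow_dvd_pow _ n.le_succ).trans hdvd).mul_left _)
    have hmono : P = C (P.coeff t) * X ^ t := by
      ext k
      rw [coeff_C_mul_X_pow]
      split_ifs with hkt
      · rw [hkt]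
      by_contra hk
      have h0 := congrArg (coeff · k) hQ
      rw [hQdef, coeff_X_mul_derivative_sub_C_mul, coeff_zero] at h0
      refine hkt (CharP.natCast_injOn_Iio R p (hlt k (mem_support_iff.mpr hk)) (hlt t ht) ?_)
      exact sub_eq_zero.mp ((mul_eq_zero.mp h0).resolve_right hk)
    have h1 : P.eval 1 = 0 := by
      obtain ⟨g, hg⟩ := (pow_dvd_pow (X - 1 : R[X]) (Nat.succ_pos n)).trans hdvd
      simp [hg]
    rw [hmono] at h1
    simp only [eval_mul, eval_C, eval_pow, eval_X, one_pow, mul_one] at h1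
    exact (mem_support_iff.mp ht) h1

theorem prod_X_sub_C_dvd_of_injective [IsDomain R] {ι : Type*} [Fintype ι] {x : ι → R}
    (hx : Function.Injective x) {f : R[X]} (hf : ∀ i, f.IsRoot (x i)) :
    ∏ i, (X - C (x i)) ∣ f := by
  rcases eq_or_ne f 0 with rfl | hf0
  · exact dvd_zero _
  have hle : univ.val.map x ≤ f.roots :=
    (Multiset.le_iff_subset (univ.nodup.map hx)).mpr fun r hr => by
      obtain ⟨i, -, rfl⟩ := Multiset.mem_map.mp hr
      exact (mem_roots hf0).mpr (hf i)
  convert (Multiset.prod_X_sub_C_dvd_iff_le_roots hf0 _).mpr hle using 1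
  rw [Finset.prod_eq_multiset_prod, Multiset.map_map]
  rfl

theorem coeff_sum_C_mul_X_pow {ι : Type*} [Fintype ι] {α : ι → ℕ} (hα : Function.Injective α)
    (c : ι → R) (i : ι) : (∑ j, C (c j) * X ^ α j).coeff (α i) = c i := by
  rw [finsetSum_coeff, Finset.sum_eq_single i (fun j _ hj => by simp [hα.ne hj.symm]) (by simp)]
  simp

theorem support_sum_C_mul_X_pow_subset {ι : Type*} [Fintype ι] (α : ι → ℕ) (c : ι → R) :
    (∑ j, C (c j) * X ^ α j).support ⊆ univ.image α := by
  intro k hk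
  by_contra hkα
  refine mem_support_iff.mp hk ?_
  rw [finsetSum_coeff]
  refine Finset.sum_eq_zero fun j _ => ?_
  have hjk : k ≠ α j := by rintro rfl; exact hkα (mem_image_of_mem α (mem_univ j))
  simp [hjk]

end Polynomial

namespace Matrix

variable {R : Type*} [CommRing R]

theorem exists_mulVec_eq_zero_not_dvd {ι κ : Type*} [IsDomain R] [WfDvdMonoid R] [Fintype κ]
    {π : R} (hπ : Prime π) {M : Matrix ι κ R} {v : κ → R} (hv0 : v ≠ 0) (hv : M *ᵥ v = 0) :
    ∃ w, M *ᵥ w = 0 ∧ ∃ j, ¬π ∣ w j := by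
  obtain ⟨j, hj⟩ := Function.ne_iff.mp hv0
  obtain ⟨N, hN⟩ := FiniteMultiplicity.of_not_isUnit hπ.not_isUnit hj
  clear hv0 hj
  by_contra! hdvd
  induction N generalizing v with
  | zero => exact hN (by simpa using hdvd v hv j)
  | succ N ih =>
    choose u hu using hdvd v hv
    obtain rfl : v = π • u := funext hu
    rw [mulVec_smul, smul_eq_zero, or_iff_right hπ.ne_zero] at hv
    exact ih hv fun h => hN <| by
      rw [pow_succ', Pi.smul_apply, smul_eq_mul]
      exact mul_dvd_mul_left π h

def genVandermonde {ι κ : Type*} (x : ι → R) (α : κ → ℕ) : Matrix ι κ R :=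
  of fun i j => x i ^ α j

theorem mem_of_genVandermonde_mulVec_eq_zero [IsDomain R] {p : ℕ} {I : Ideal R} [I.IsPrime]
    [CharP (R ⧸ I) p] {ι : Type*} [Fintype ι] {x : ι → R} (hx : Function.Injective x)
    (hx1 : ∀ i, x i - 1 ∈ I) {α : ι → ℕ} (hα : Function.Injective α) (hαp : ∀ j, α j < p)
    {w : ι → R} (hw : genVandermonde x α *ᵥ w = 0) (j : ι) : w j ∈ I := by
  set Q : R[X] := ∑ l, C (w l) * X ^ α l
  have hroot : ∀ i, Q.IsRoot (x i) := fun i => by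
    have hi := congrFun hw i
    simp only [genVandermonde, mulVec, dotProduct, of_apply, Pi.zero_apply] at hi
    simp only [IsRoot, Q, eval_finsetSum, eval_mul, eval_C, eval_pow, eval_X]
    simpa only [mul_comm] using hi
  have hmk : ∀ i, Ideal.Quotient.mk I (x i) = 1 := fun i => by
    rw [← sub_eq_zero, ← map_one (Ideal.Quotient.mk I), ← map_sub, Ideal.Quotient.eq_zero_iff_mem]
    exact hx1 i
  have hQmap : Q.map (Ideal.Quotient.mk I) = ∑ l, C (Ideal.Quotient.mk I (w l)) * X ^ α l := by
    simp [Q, Polynomial.map_sum]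
  have hdvd : (X - 1 : (R ⧸ I)[X]) ^ Fintype.card ι ∣ Q.map (Ideal.Quotient.mk I) := by
    simpa [Polynomial.map_prod, hmk] using
      Polynomial.map_dvd (Ideal.Quotient.mk I) (prod_X_sub_C_dvd_of_injective hx hroot)
  have h0 : Q.map (Ideal.Quotient.mk I) = 0 := by
    rw [hQmap] at hdvd ⊢
    refine eq_zero_of_X_sub_one_pow_dvd (p := p) ?_ (fun k hk => ?_) hdvd
    · grw [support_sum_C_mul_X_pow_subset, card_image_le, card_univ]
    · obtain ⟨l, -, rfl⟩ := mem_image.mp (support_sum_C_mul_X_pow_subset _ _ hk)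
      exact hαp l
  have hj := congrArg (coeff · (α j)) h0
  simp only [hQmap, coeff_sum_C_mul_X_pow hα, coeff_zero] at hj
  exact Ideal.Quotient.eq_zero_iff_mem.mp hj

end Matrix

namespace IsPrimitiveRoot

variable {p : ℕ}

theorem zpow_eq_pow_val {K : Type*} [Field K] [NeZero p] {ω : K} (hω : IsPrimitiveRoot ω p)
    (k : ℤ) : ω ^ k = ω ^ (k : ZMod p).val := by
  rw [← zpow_natCast, ZMod.val_intCast]
  conv_lhs => rw [← Int.emod_add_mul_ediv k p]
  rw [zpow_add₀ (hω.ne_zero (NeZero.ne p)), zpow_mul, zpow_natCast, hω.pow_eq_one, one_zpow,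
    mul_one]

open Matrix NumberField

variable [hp : Fact p.Prime]

theorem det_genVandermonde_toInteger_pow_ne_zero {L : Type*} [Field L] [CharZero L]
    [IsCyclotomicExtension {p} ℚ L] {z : L} (hz : IsPrimitiveRoot z p) {ι : Type*} [Fintype ι]
    [DecidableEq ι] {α β : ι → ℕ} (hα : Function.Injective α) (hαp : ∀ i, α i < p)
    (hβ : Function.Injective β) (hβp : ∀ i, β i < p) :
    (genVandermonde (fun i => hz.toInteger ^ β i) α).det ≠ 0 := by
  have : NumberField L := IsCyclotomicExtension.numberField {p} ℚ L
  intro hdet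
  obtain ⟨v, hv0, hv⟩ := exists_mulVec_eq_zero_iff.mpr hdet
  have hπ : Prime (hz.toInteger - 1) := hz.zeta_sub_one_prime'
  obtain ⟨w, hw, j, hj⟩ := exists_mulVec_eq_zero_not_dvd hπ hv0 hv
  set I := Ideal.span {hz.toInteger - 1}
  have : I.IsPrime := (Ideal.span_singleton_prime hπ.ne_zero).mpr hπ
  have : CharP (𝓞 L ⧸ I) p := (CharP.charP_iff_prime_eq_zero hp.out).mpr <| by
    rw [← map_natCast (Ideal.Quotient.mk I), Ideal.Quotient.eq_zero_iff_mem]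
    exact Ideal.mem_span_singleton.mpr hz.toInteger_sub_one_dvd_prime'
  refine hj (Ideal.mem_span_singleton.mp (mem_of_genVandermonde_mulVec_eq_zero ?_ (fun i => ?_)
    hα hαp hw j))
  · exact fun i i' h => hβ (hz.toInteger_isPrimitiveRoot.pow_inj (hβp i) (hβp i') h)
  · exact Ideal.mem_span_singleton.mpr (sub_one_dvd_pow_sub_one _ _)

theorem det_zpow_mul_ne_zero {K : Type*} [Field K] [CharZero K] {ω : K}
    (hω : IsPrimitiveRoot ω p) {ι : Type*} [Fintype ι] [DecidableEq ι] {a b : ι → ℤ}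
    (ha : Function.Injective fun i => (a i : ZMod p))
    (hb : Function.Injective fun i => (b i : ZMod p)) :
    (of fun i j => ω ^ (a j * b i)).det ≠ 0 := by
  have : NeZero p := ⟨hp.out.ne_zero⟩
  let L := CyclotomicField p ℚ
  have : IsCyclotomicExtension {p} ℚ L := CyclotomicField.isCyclotomicExtension p ℚ
  have hz := IsCyclotomicExtension.zeta_spec p ℚ L
  set e := hz.embeddingsEquivPrimitiveRoots K (cyclotomic.irreducible_rat hp.out.pos)
  set φ : L →ₐ[ℚ] K := e.symm ⟨ω, (mem_primitiveRoots hp.out.pos).mpr hω⟩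
  have hφ : φ (IsCyclotomicExtension.zeta p ℚ L) = ω :=
    congrArg Subtype.val (e.apply_symm_apply _)
  set f : 𝓞 L →+* K := φ.toRingHom.comp (algebraMap (𝓞 L) L)
  have hf : Function.Injective f := φ.injective.comp RingOfIntegers.coe_injective
  have hmap : (of fun i j => ω ^ (a j * b i)) = f.mapMatrix (genVandermonde
      (fun i => hz.toInteger ^ (b i : ZMod p).val) fun j => (a j : ZMod p).val) := by
    ext i j
    simp only [RingHom.mapMatrix_apply, map_apply, genVandermonde, of_apply, map_pow, f,
      RingHom.comp_apply]
    change _ = (φ (IsCyclotomicExtension.zeta p ℚ L) ^ _) ^ _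
    rw [hφ, ← pow_mul, ← zpow_natCast, hω.zpow_eq_pow_val, hω.zpow_eq_pow_val]
    push_cast [ZMod.natCast_val, ZMod.cast_id', mul_comm]
    rfl
  rw [hmap, ← RingHom.map_det]
  exact (map_ne_zero_iff f hf).mpr (hz.det_genVandermonde_toInteger_pow_ne_zero
    ((ZMod.val_injective p).comp ha) (fun _ => ZMod.val_lt _)
    ((ZMod.val_injective p).comp hb) (fun _ => ZMod.val_lt _))

end IsPrimitiveRoot

/-- for `Λ = diag(λ e^{i2π a_ℓ/ζ})` with `λ ≠ 0`, `ζ` prime, the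
`a_ℓ` pairwise incongruent mod `ζ`, and a row vector `C` with nonzero entries
`c_ℓ`, the matrix with rows `C Λ^{b_m}` for `b_m` pairwise incongruent mod `ζ`
is invertible. -/
theorem stmt_13 (ζ : ℕ) (hζ : ζ.Prime) (n : ℕ) (lam : ℂ) (hlam : lam ≠ 0)
    (a : Fin n → ℤ)
    (ha : ∀ i j : Fin n, i ≠ j → ¬ a i ≡ a j [ZMOD (ζ : ℕ)])
    (c : Fin n → ℂ) (hc : ∀ ℓ, c ℓ ≠ 0)
    (b : Fin n → ℕ)
    (hb : ∀ i j : Fin n, i ≠ j → ¬ (b i : ℤ) ≡ (b j : ℤ) [ZMOD (ζ : ℕ)]) :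
    IsUnit (Matrix.of fun m ℓ : Fin n =>
      c ℓ * (lam * Complex.exp (2 * Real.pi * Complex.I * ((a ℓ : ℂ)) / (ζ : ℂ))) ^ (b m)) := by
  have : Fact ζ.Prime := ⟨hζ⟩
  set ω := Complex.exp (2 * Real.pi * Complex.I / ζ)
  have hω : IsPrimitiveRoot ω ζ := Complex.isPrimitiveRoot_exp ζ hζ.ne_zero
  have hM : (Matrix.of fun m ℓ : Fin n =>
      c ℓ * (lam * Complex.exp (2 * Real.pi * Complex.I * ((a ℓ : ℂ)) / (ζ : ℂ))) ^ (b m)) =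
      Matrix.diagonal (fun m => lam ^ b m) * Matrix.of (fun m ℓ => ω ^ (a ℓ * (b m : ℤ))) *
        Matrix.diagonal c := by
    ext m ℓ
    rw [Matrix.mul_diagonal, Matrix.diagonal_mul, Matrix.of_apply, Matrix.of_apply, mul_pow,
      show 2 * Real.pi * Complex.I * (a ℓ : ℂ) / ζ = a ℓ * (2 * Real.pi * Complex.I / ζ) by ring,
      Complex.exp_int_mul, zpow_mul, zpow_natCast]
    ring
  have hinj {x : Fin n → ℤ} (hx : ∀ i j, i ≠ j → ¬ x i ≡ x j [ZMOD ζ]) :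
      Function.Injective fun i => (x i : ZMod ζ) := fun i j h =>
    Classical.byContradiction fun hij => hx i j hij ((ZMod.intCast_eq_intCast_iff _ _ _).mp h)
  rw [hM, Matrix.isUnit_iff_isUnit_det, Matrix.det_mul, Matrix.det_mul, Matrix.det_diagonal,
    Matrix.det_diagonal, isUnit_iff_ne_zero]
  refine mul_ne_zero (mul_ne_zero ?_ (hω.det_zpow_mul_ne_zero (hinj ha) (hinj hb))) ?_
  · exact prod_ne_zero_iff.mpr fun m _ => pow_ne_zero _ hlam
  · exact prod_ne_zero_iff.mpr fun ℓ _ => hc ℓ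
end

section
/- Let ζ ≥ 1, α ∈ {0,…,ζ−1}, Z ∈ ℤ₊, and let S ⊆ ℤ₊ satisfy |S ∩ [0,k)| ≤ Π_d + ν_d k for all k with ν_d < 1/ζ. Then for k = (ℓ_e+1)ζ with ℓ_e the largest integer satisfying ℓ_e ≤ (Π_d + Z)/(1 − ζν_d), the set {s ∈ [0,k) : s ∉ S, s ≡ α (mod ζ)} contains more than Z elements. -/
lemma count_mod_eq (L ζ α : ℕ) (hα : α < ζ) :
    ((Finset.range (L * ζ)).filter (fun s => s % ζ = α)).card = L := by
  have hζ : 0 < ζ := lt_of_le_of_lt (Nat.zero_le _) hα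
  have heq : (Finset.range (L * ζ)).filter (fun s => s % ζ = α)
      = (Finset.range L).image (fun i => i * ζ + α) := by
    ext s
    simp only [Finset.mem_filter, Finset.mem_range, Finset.mem_image]
    constructor
    · rintro ⟨h1, h2⟩
      refine ⟨s / ζ, ?_, ?_⟩
      · exact (Nat.div_lt_iff_lt_mul hζ).mpr h1
      · rw [← h2, Nat.mul_comm]; exact Nat.div_add_mod s ζ
    · rintro ⟨i, hi, rfl⟩
      refine ⟨?_, ?_⟩
      · have := Nat.mul_le_mul_right ζ (show i + 1 ≤ L by omega)
        have : i * ζ + ζ ≤ L * ζ := by rwa [Nat.succ_mul] at this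
        omega
      · rw [Nat.add_mod, Nat.mul_mod_left, Nat.zero_add]
        simp [Nat.mod_eq_of_lt hα]
  rw [heq, Finset.card_image_of_injective _ ?_, Finset.card_range]
  intro a b h
  simp only at h
  exact Nat.eq_of_mul_eq_mul_right hζ (by omega)

/-- under an averagely bounded DoS duration with `ν_d < 1/ζ`,
the interval `[0, (ℓ_e+1)ζ)` with `ℓ_e = ⌊(Π_d + Z)/(1 − ζν_d)⌋` contains more
than `Z` attack-free time-steps congruent to `α` mod `ζ`. -/
theorem stmt_15 (ζ : ℕ) (hζ : 1 ≤ ζ) (α : ℕ) (hα : α < ζ) (Z : ℕ)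
    (S : Set ℕ) [DecidablePred (· ∈ S)]
    (Pd νd : ℝ) (hPd : 0 ≤ Pd) (hνd0 : 0 ≤ νd) (hνd : νd < 1 / (ζ : ℝ))
    (hdur : ∀ k : ℕ, (((Finset.range k).filter (· ∈ S)).card : ℝ) ≤ Pd + νd * k) :
    Z < ((Finset.range ((⌊(Pd + Z) / (1 - (ζ : ℝ) * νd)⌋₊ + 1) * ζ)).filter
      (fun s => s ∉ S ∧ s % ζ = α)).card := by
  set L : ℕ := ⌊(Pd + Z) / (1 - (ζ : ℝ) * νd)⌋₊ + 1 with hL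
  set k : ℕ := L * ζ with hk
  have hζpos : (0 : ℝ) < ζ := by exact_mod_cast hζ
  have hpos : (0 : ℝ) < 1 - (ζ : ℝ) * νd := by
    have : (ζ : ℝ) * νd < (ζ : ℝ) * (1 / ζ) := by
      rcases eq_or_lt_of_le hνd0 with h | h
      · rw [← h]; simp [hζpos.ne', one_div_pos.mpr hζpos]
      · exact (mul_lt_mul_iff_right₀ hζpos).mpr hνd
    rw [mul_one_div, div_self hζpos.ne'] at this
    linarith
  -- key: L > (Pd + Z)/(1 - ζ νd)
  have hLgt : (Pd + Z) / (1 - (ζ : ℝ) * νd) < (L : ℝ) := by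
    rw [hL]; push_cast; exact Nat.lt_floor_add_one _
  have hLin : Pd + (Z : ℝ) < L * (1 - (ζ : ℝ) * νd) := by
    rwa [div_lt_iff₀ hpos] at hLgt
  -- counts
  have hA : ((Finset.range k).filter (fun s => s % ζ = α)).card = L :=
    count_mod_eq L ζ α hα
  have hB := hdur k
  -- subset: A \ B ⊆ T
  set T := (Finset.range k).filter (fun s => s ∉ S ∧ s % ζ = α) with hT
  have hsub : (Finset.range k).filter (fun s => s % ζ = α) \
      (Finset.range k).filter (· ∈ S) ⊆ T := by
    intro s hs
    simp only [Finset.mem_sdiff, Finset.mem_filter, hT] at hs ⊢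
    tauto
  have hcard : L - ((Finset.range k).filter (· ∈ S)).card ≤ T.card := by
    calc L - ((Finset.range k).filter (· ∈ S)).card
        ≤ ((Finset.range k).filter (fun s => s % ζ = α) \
            (Finset.range k).filter (· ∈ S)).card := by
          rw [← hA]; exact Finset.le_card_sdiff _ _
      _ ≤ T.card := Finset.card_le_card hsub
  -- real inequality
  have hBk : (((Finset.range k).filter (· ∈ S)).card : ℝ) ≤ Pd + νd * k := hB
  have hkcast : (k : ℝ) = L * ζ := by rw [hk]; push_cast; ring
  have hLB : (L : ℝ) ≤ (T.card : ℝ) + (((Finset.range k).filter (· ∈ S)).card : ℝ) := by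
    have : L ≤ T.card + ((Finset.range k).filter (· ∈ S)).card := by omega
    exact_mod_cast this
  have hZT : (Z : ℝ) < (T.card : ℝ) := by
    have h3 : (Z : ℝ) < (L : ℝ) - (Pd + νd * k) := by rw [hkcast]; nlinarith
    linarith
  exact_mod_cast hZT
end
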